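/- arXiv:2501.09501 — 4 statements merged into one kernel-verified Lean document; each statement's English description precedes it below -/
import Mathlib

section
/- In the tropical semiring T = (ℝ ∪ {-∞}, max, +), an n×n matrix P is invertible (i.e. there exists Q with PQ = QP = I, where I is the tropical identity matrix with 0 on the diagonal and -∞ off it) if and only if P is a monomial matrix, meaning every row and every column of P contains exactly one entry different from -∞. -/
open scoped Classical

/-- The tropical (max-plus) semiring carrier: `ℝ ∪ {-∞}`, where `⊔` is tropical
addition (max) and `+` is tropical multiplication (with `⊥ = -∞` absorbing). -/
abbrev Trop : Type := WithBot ℝ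

/-- Tropical matrix multiplication: `(A ⊗ B) i j = max_k (A i k + B k j)`. -/
def tmul {n m p : ℕ} (A : Fin n → Fin m → Trop) (B : Fin m → Fin p → Trop) :
    Fin n → Fin p → Trop :=
  fun i j => Finset.univ.sup fun k => A i k + B k j

/-- Tropical matrix-vector multiplication (column vector on the right). -/
def tvmul {n m : ℕ} (A : Fin n → Fin m → Trop) (v : Fin m → Trop) : Fin n → Trop :=
  fun i => Finset.univ.sup fun k => A i k + v k

/-- Tropical vector-matrix multiplication (row vector on the left). -/
def vtmul {n m : ℕ} (v : Fin n → Trop) (A : Fin n → Fin m → Trop) : Fin m → Trop :=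
  fun j => Finset.univ.sup fun k => v k + A k j

/-- The tropical identity matrix: `0` on the diagonal, `-∞` elsewhere. -/
def tId (n : ℕ) : Fin n → Fin n → Trop :=
  fun i j => if i = j then ((0 : ℝ) : Trop) else ⊥

/-- A monomial matrix: exactly one entry different from `-∞` in each row and each column. -/
def IsMonomial {n : ℕ} (P : Fin n → Fin n → Trop) : Prop :=
  (∀ i, ∃! j, P i j ≠ ⊥) ∧ (∀ j, ∃! i, P i j ≠ ⊥)

/-- A `T`-subsemimodule of `T^n`: closed under tropical addition (max) and scaling. -/
def IsTropSubmodule {n : ℕ} (S : Set (Fin n → Trop)) : Prop :=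
  (∀ x ∈ S, ∀ y ∈ S, x ⊔ y ∈ S) ∧
  (∀ c : Trop, ∀ x ∈ S, (fun i => c + x i) ∈ S)

/-- The `T`-subsemimodule generated by a set of vectors. -/
def genBy {n : ℕ} (G : Set (Fin n → Trop)) : Set (Fin n → Trop) :=
  ⋂₀ {S | IsTropSubmodule S ∧ G ⊆ S}

/-- The column space of a tropical matrix. -/
def colSpace {n m : ℕ} (A : Fin n → Fin m → Trop) : Set (Fin n → Trop) :=
  genBy {v | ∃ j, v = fun i => A i j}

/-- The row space of a tropical matrix. -/
def rowSpace {n m : ℕ} (A : Fin n → Fin m → Trop) : Set (Fin m → Trop) :=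
  genBy {v | ∃ i, v = fun j => A i j}

/-- The column rank: minimum cardinality of a generating set of the column space. -/
noncomputable def colRank {n m : ℕ} (A : Fin n → Fin m → Trop) : ℕ :=
  sInf {k | ∃ G : Finset (Fin n → Trop), G.card = k ∧ genBy (↑G) = colSpace A}

/-- The row rank: minimum cardinality of a generating set of the row space. -/
noncomputable def rowRank {n m : ℕ} (A : Fin n → Fin m → Trop) : ℕ :=
  sInf {k | ∃ G : Finset (Fin m → Trop), G.card = k ∧ genBy (↑G) = rowSpace A}

/-- Isomorphism of tropical subsemimodules (given by a bijection preserving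
tropical addition and scaling). -/
def TropIso {n m : ℕ} (S : Set (Fin n → Trop)) (S' : Set (Fin m → Trop)) : Prop :=
  ∃ f : (Fin n → Trop) → (Fin m → Trop),
    Set.BijOn f S S' ∧
    (∀ x ∈ S, ∀ y ∈ S, f (x ⊔ y) = f x ⊔ f y) ∧
    (∀ c : Trop, ∀ x ∈ S, f (fun i => c + x i) = fun i => c + f x i)

/-- The `H`-class of a matrix `A` in `M(T)` (among matrices of the same shape),
characterised by equality of column and row spaces. -/
def HSet {n m : ℕ} (A : Fin n → Fin m → Trop) : Set (Fin n → Fin m → Trop) :=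
  {B | colSpace B = colSpace A ∧ rowSpace B = rowSpace A}

/-- Adjacency of the coloured bipartite graph `B_A` of a tropical matrix. -/
def BAdj {r c : ℕ} (A : Fin r → Fin c → Trop) :
    (Fin r ⊕ Fin c) → (Fin r ⊕ Fin c) → Prop
  | Sum.inl i, Sum.inr j => A i j ≠ ⊥
  | Sum.inr j, Sum.inl i => A i j ≠ ⊥
  | _, _ => False

/-- Connectedness of the bipartite graph `B_A`. -/
def BConnected {r c : ℕ} (A : Fin r → Fin c → Trop) : Prop :=
  ∀ x y : Fin r ⊕ Fin c, Relation.ReflTransGen (BAdj A) x y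

/-- `lam` is a tropical eigenvalue of `P`. -/
def IsEig {n : ℕ} (P : Fin n → Fin n → Trop) (lam : Trop) : Prop :=
  ∃ v : Fin n → Trop, v ≠ (fun _ => ⊥) ∧ tvmul P v = fun i => lam + v i

/-- The group `G_A` of monomial matrices `P` with `C(PA) = C(A)`. -/
def GA {r c : ℕ} (A : Fin r → Fin c → Trop) : Set (Fin r → Fin r → Trop) :=
  {P | IsMonomial P ∧ colSpace (tmul P A) = colSpace A}

/-- The dual group `{}_AG` of monomial matrices `Q` with `R(AQ) = R(A)`. -/
def AGr {r c : ℕ} (A : Fin r → Fin c → Trop) : Set (Fin c → Fin c → Trop) :=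
  {Q | IsMonomial Q ∧ rowSpace (tmul A Q) = rowSpace A}

lemma sup_eq_of_single {n : ℕ} (f : Fin n → Trop) (k0 : Fin n)
    (h : ∀ k, k ≠ k0 → f k = ⊥) : Finset.univ.sup f = f k0 := by
  apply le_antisymm
  · apply Finset.sup_le
    intro k _
    by_cases hk : k = k0
    · subst hk; exact le_rfl
    · rw [h k hk]; exact bot_le
  · exact Finset.le_sup (Finset.mem_univ k0)

/-- An `n × n` tropical matrix is invertible iff it is monomial. -/
theorem stmt_0 {n : ℕ} (P : Fin n → Fin n → Trop) :
    (∃ Q : Fin n → Fin n → Trop, tmul P Q = tId n ∧ tmul Q P = tId n) ↔ IsMonomial P := by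
  constructor
  · rintro ⟨Q, hPQ, hQP⟩
    have hPQ' : ∀ i k j, i ≠ j → P i k + Q k j = ⊥ := by
      intro i k j hij
      have h1 : P i k + Q k j ≤ tmul P Q i j :=
        Finset.le_sup (f := fun k => P i k + Q k j) (Finset.mem_univ k)
      rw [hPQ] at h1
      simpa [tId, hij] using h1
    have hQP' : ∀ j k j', j ≠ j' → Q j k + P k j' = ⊥ := by
      intro j k j' hjj
      have h1 : Q j k + P k j' ≤ tmul Q P j j' :=
        Finset.le_sup (f := fun k => Q j k + P k j') (Finset.mem_univ k)
      rw [hQP] at h1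
      simpa [tId, hjj] using h1
    have hdiagPQ : ∀ i, ∃ k, P i k ≠ ⊥ ∧ Q k i ≠ ⊥ := by
      intro i
      by_contra h
      push_neg at h
      have hb : tmul P Q i i = ⊥ := by
        apply (Finset.sup_eq_bot_iff _ _).mpr
        intro k _
        rcases eq_or_ne (P i k) ⊥ with h' | h'
        · simp [h']
        · rw [h k h', WithBot.add_bot]
      rw [hPQ] at hb
      simp [tId] at hb
    have hdiagQP : ∀ j, ∃ k, Q j k ≠ ⊥ ∧ P k j ≠ ⊥ := by
      intro j
      by_contra h
      push_neg at h
      have hb : tmul Q P j j = ⊥ := by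
        apply (Finset.sup_eq_bot_iff _ _).mpr
        intro k _
        rcases eq_or_ne (Q j k) ⊥ with h' | h'
        · simp [h']
        · rw [h k h', WithBot.add_bot]
      rw [hQP] at hb
      simp [tId] at hb
    -- key: P i j ≠ ⊥ → Q j i ≠ ⊥
    have key : ∀ i j, P i j ≠ ⊥ → Q j i ≠ ⊥ := by
      intro i j hij
      obtain ⟨k, hQjk, hPkj⟩ := hdiagQP j
      by_cases hk : k = i
      · subst hk; exact hQjk
      · exfalso
        have := hPQ' i j k (fun h => hk h.symm)
        rcases WithBot.add_eq_bot.mp this with h | h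
        · exact hij h
        · exact hQjk h
    constructor
    · intro i
      obtain ⟨j, hPij, _⟩ := hdiagPQ i
      refine ⟨j, hPij, ?_⟩
      intro j' hPij'
      by_contra hne
      have hQ : Q j' i ≠ ⊥ := key i j' hPij'
      have := hQP' j' i j hne
      rcases WithBot.add_eq_bot.mp this with h | h
      · exact hQ h
      · exact hPij h
    · intro j
      obtain ⟨k, hQjk, hPkj⟩ := hdiagQP j
      refine ⟨k, hPkj, ?_⟩
      intro i' hPij'
      by_contra hne
      have hQ : Q j i' ≠ ⊥ := key i' j hPij'
      have := hPQ' k j i' (fun h => hne h.symm)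
      rcases WithBot.add_eq_bot.mp this with h | h
      · exact hPkj h
      · exact hQ h
  · rintro ⟨hrow, hcol⟩
    -- σ i : the unique nonbot column in row i
    have hσ : ∀ i, ∃ j, P i j ≠ ⊥ ∧ ∀ j', P i j' ≠ ⊥ → j' = j := by
      intro i; obtain ⟨j, hj, hj'⟩ := hrow i; exact ⟨j, hj, hj'⟩
    choose σ hσ1 hσ2 using hσ
    have σinj : Function.Injective σ := by
      intro i i' h
      obtain ⟨k, _, hk⟩ := hcol (σ i)
      have h1 := hk i (hσ1 i)
      have h2 := hk i' (by rw [h]; exact hσ1 i')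
      rw [h1, h2]
    have σsurj : Function.Surjective σ := by
      intro j
      obtain ⟨i, hi, _⟩ := hcol j
      exact ⟨i, (hσ2 i j hi).symm⟩
    -- real values
    have hval : ∀ i, ∃ a : ℝ, P i (σ i) = (a : Trop) := by
      intro i
      obtain ⟨a, ha⟩ := WithBot.ne_bot_iff_exists.mp (hσ1 i)
      exact ⟨a, ha.symm⟩
    choose a ha using hval
    set Q : Fin n → Fin n → Trop := fun j i' => if σ i' = j then ((-(a i') : ℝ) : Trop) else ⊥
      with hQdef
    refine ⟨Q, ?_, ?_⟩
    · funext i i'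
      have hsup : tmul P Q i i' = P i (σ i) + Q (σ i) i' := by
        apply sup_eq_of_single
        intro k hk
        have : P i k = ⊥ := by
          by_contra h
          exact hk (hσ2 i k h)
        rw [this, WithBot.bot_add]
      rw [hsup, ha i, tId]
      by_cases h : i = i'
      · subst h
        simp only [hQdef, if_pos rfl, if_pos rfl]
        rw [← WithBot.coe_add]
        norm_num
      · have : σ i' ≠ σ i := fun hc => h (σinj hc).symm
        simp [hQdef, this, h]
    · funext j j'
      obtain ⟨i, hi⟩ := σsurj j
      have hsup : tmul Q P j j' = Q j i + P i j' := by
        apply sup_eq_of_single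
        intro k hk
        have : Q j k = ⊥ := by
          simp only [hQdef]
          rw [if_neg]
          intro hc
          exact hk (σinj (hc.trans hi.symm))
        rw [this, WithBot.bot_add]
      rw [hsup, tId]
      by_cases h : j = j'
      · subst h
        simp only [hQdef, if_pos hi, if_pos rfl]
        rw [← hi, ha i, ← WithBot.coe_add]
        norm_num
      · have hP : P i j' = ⊥ := by
          by_contra hc
          exact h (hi ▸ (hσ2 i j' hc ▸ rfl) : j = j')
        simp [hP, h]
end

section
/- Let H be an H-class of a semigroup S and let Γ_H = {φ_s : H → H, a ↦ sa | s ∈ S^1, sH ⊆ H}. Then Γ_H is a group acting simply transitively on H: for all x, y ∈ H there is a unique g ∈ Γ_H with g(x) = y. -/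
open scoped Classical

section

variable {S : Type*} [Semigroup S]

/-- Green's `R` relation on `S¹ = WithOne S`: mutual right divisibility. -/
def MRRel (a b : WithOne S) : Prop :=
  (∃ x, a * x = b) ∧ (∃ y, b * y = a)

/-- Green's `L` relation on `S¹ = WithOne S`: mutual left divisibility. -/
def MLRel (a b : WithOne S) : Prop :=
  (∃ x, x * a = b) ∧ (∃ y, y * b = a)

/-- Green's `H` relation on `S¹`. -/
def MHRel (a b : WithOne S) : Prop :=
  MRRel a b ∧ MLRel a b

/-- The `H`-class of `a ∈ S` (inside `S`). -/
def Hcl (a : S) : Set S :=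
  {b | MHRel (a : WithOne S) (b : WithOne S)}

/-- The left Schützenberger group of the `H`-class of `a`: the transformations of
`H` given by left multiplication by elements `s ∈ S¹` with `sH ⊆ H`. -/
def Schutz (a : S) : Set (Hcl a → Hcl a) :=
  {f | ∃ s : WithOne S, ∀ x : Hcl a, ((f x : S) : WithOne S) = s * ((x : S) : WithOne S)}

end

/-!
Left multiplication by `s ∈ S¹` taking one point `x` of `H` into `H` maps all of `H` into `H`
(Green's lemma): every `z ∈ H` is `x u`, so `s z = (s x) u`, and a left inverse `t` of `s` on `x`
is one on all of `H`. The same factorisation `z = x u` shows that an element of `Γ_H` is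
determined by its value at one point. Since `x L y` for all `x, y ∈ H`, some `s` sends `x` to `y`,
which gives transitivity; inverses then come from transitivity plus uniqueness.
-/

section Green

variable {S : Type*} [Semigroup S]

theorem MRRel.refl (a : WithOne S) : MRRel a a := ⟨⟨1, mul_one a⟩, ⟨1, mul_one a⟩⟩

theorem MLRel.refl (a : WithOne S) : MLRel a a := ⟨⟨1, one_mul a⟩, ⟨1, one_mul a⟩⟩

theorem MRRel.symm {a b : WithOne S} (h : MRRel a b) : MRRel b a := ⟨h.2, h.1⟩

theorem MLRel.symm {a b : WithOne S} (h : MLRel a b) : MLRel b a := ⟨h.2, h.1⟩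

theorem MRRel.trans {a b c : WithOne S} (h : MRRel a b) (h' : MRRel b c) : MRRel a c := by
  obtain ⟨⟨x, rfl⟩, ⟨y, hy⟩⟩ := h
  obtain ⟨⟨x', rfl⟩, ⟨y', hy'⟩⟩ := h'
  exact ⟨⟨x * x', (mul_assoc ..).symm⟩, ⟨y' * y, by rw [← mul_assoc, hy', hy]⟩⟩

theorem MLRel.trans {a b c : WithOne S} (h : MLRel a b) (h' : MLRel b c) : MLRel a c := by
  obtain ⟨⟨x, rfl⟩, ⟨y, hy⟩⟩ := h
  obtain ⟨⟨x', rfl⟩, ⟨y', hy'⟩⟩ := h'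
  exact ⟨⟨x' * x, mul_assoc ..⟩, ⟨y * y', by rw [mul_assoc, hy', hy]⟩⟩

theorem self_mem_Hcl (a : S) : a ∈ Hcl a := ⟨MRRel.refl _, MLRel.refl _⟩

theorem mrrel_of_mem_Hcl {a x z : S} (hx : x ∈ Hcl a) (hz : z ∈ Hcl a) :
    MRRel (x : WithOne S) z :=
  hx.1.symm.trans hz.1

theorem mlrel_of_mem_Hcl {a x z : S} (hx : x ∈ Hcl a) (hz : z ∈ Hcl a) :
    MLRel (x : WithOne S) z :=
  hx.2.symm.trans hz.2

/-- The product `s * z ∈ S¹`, which lies in `S` because `z` does. -/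
def leftAct (s : WithOne S) (z : S) : S :=
  WithOne.recOneCoe z (· * z) s

@[simp]
theorem coe_leftAct (s : WithOne S) (z : S) : ((leftAct s z : S) : WithOne S) = s * z := by
  induction s using WithOne.recOneCoe <;> simp [leftAct]

theorem leftAct_mem_Hcl {a x y z : S} (hx : x ∈ Hcl a) (hy : y ∈ Hcl a) {s : WithOne S}
    (hs : s * x = y) (hz : z ∈ Hcl a) : leftAct s z ∈ Hcl a := by
  obtain ⟨t, ht⟩ := (mlrel_of_mem_Hcl hy hx).1
  obtain ⟨⟨u, hu⟩, ⟨v, hv⟩⟩ := mrrel_of_mem_Hcl hx hz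
  have hsz : ((leftAct s z : S) : WithOne S) = y * u := by
    rw [coe_leftAct, ← hu, ← mul_assoc, hs]
  refine ⟨hy.1.trans ⟨⟨u, hsz.symm⟩, ⟨v, ?_⟩⟩,
    hz.2.trans ⟨⟨s, (coe_leftAct s z).symm⟩, ⟨t, ?_⟩⟩⟩
  · rw [coe_leftAct, mul_assoc, hv, hs]
  · rw [hsz, ← mul_assoc, ht, hu]

def hclLeftMul {a x y : S} (hx : x ∈ Hcl a) (hy : y ∈ Hcl a) (s : WithOne S)
    (hs : s * x = y) : Hcl a → Hcl a :=
  fun z => ⟨leftAct s z, leftAct_mem_Hcl hx hy hs z.2⟩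

theorem hclLeftMul_mem_Schutz {a x y : S} (hx : x ∈ Hcl a) (hy : y ∈ Hcl a) (s : WithOne S)
    (hs : s * x = y) : hclLeftMul hx hy s hs ∈ Schutz a :=
  ⟨s, fun z => coe_leftAct s (z : S)⟩

theorem id_mem_Schutz (a : S) : id ∈ Schutz a :=
  ⟨1, fun _ => (one_mul _).symm⟩

theorem comp_mem_Schutz {a : S} {f g : Hcl a → Hcl a} (hf : f ∈ Schutz a)
    (hg : g ∈ Schutz a) : f ∘ g ∈ Schutz a := by
  obtain ⟨s, hs⟩ := hf
  obtain ⟨t, ht⟩ := hg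
  exact ⟨s * t, fun x => by rw [Function.comp_apply, hs, ht, mul_assoc]⟩

theorem Schutz.eq_of_apply_eq {a : S} {f g : Hcl a → Hcl a} (hf : f ∈ Schutz a)
    (hg : g ∈ Schutz a) {x : Hcl a} (h : f x = g x) : f = g := by
  obtain ⟨s, hs⟩ := hf
  obtain ⟨t, ht⟩ := hg
  funext z
  obtain ⟨⟨u, hu⟩, -⟩ := mrrel_of_mem_Hcl x.2 z.2
  apply Subtype.ext
  apply WithOne.coe_injective
  calc ((f z : S) : WithOne S) = s * x * u := by rw [hs, ← hu, mul_assoc]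
    _ = t * x * u := by rw [← hs, ← ht, h]
    _ = g z := by rw [ht, ← hu, mul_assoc]

theorem exists_mem_Schutz_apply_eq {a : S} (x y : Hcl a) :
    ∃ f ∈ Schutz a, f x = y := by
  obtain ⟨s, hs⟩ := (mlrel_of_mem_Hcl x.2 y.2).1
  exact ⟨hclLeftMul x.2 y.2 s hs, hclLeftMul_mem_Schutz ..,
    Subtype.ext <| WithOne.coe_injective <| (coe_leftAct s (x : S)).trans hs⟩

theorem exists_inverse_mem_Schutz {a : S} {f : Hcl a → Hcl a} (hf : f ∈ Schutz a) :
    ∃ g ∈ Schutz a, f ∘ g = id ∧ g ∘ f = id := by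
  let x₀ : Hcl a := ⟨a, self_mem_Hcl a⟩
  obtain ⟨g, hg, hgx₀⟩ := exists_mem_Schutz_apply_eq (f x₀) x₀
  refine ⟨g, hg, ?_, ?_⟩
  · exact Schutz.eq_of_apply_eq (comp_mem_Schutz hf hg) (id_mem_Schutz a)
      (x := f x₀) (congrArg f hgx₀)
  · exact Schutz.eq_of_apply_eq (comp_mem_Schutz hg hf) (id_mem_Schutz a) (x := x₀) hgx₀

end Green

/-- The Schützenberger group `Γ_H` of an `H`-class `H` of a semigroup `S`
is a group (under composition) acting simply transitively on `H`: it contains the identity,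
is closed under composition, every element has an inverse in it, and for all `x, y ∈ H`
there is a unique `g ∈ Γ_H` with `g x = y`. -/
theorem stmt_2 {S : Type*} [Semigroup S] (a : S) :
    (id ∈ Schutz a) ∧
    (∀ f ∈ Schutz a, ∀ g ∈ Schutz a, (f ∘ g) ∈ Schutz a) ∧
    (∀ f ∈ Schutz a, ∃ g ∈ Schutz a, f ∘ g = id ∧ g ∘ f = id) ∧
    (∀ x y : Hcl a, ∃! f : Hcl a → Hcl a, f ∈ Schutz a ∧ f x = y) := by
  refine ⟨id_mem_Schutz a, fun f hf g hg => comp_mem_Schutz hf hg,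
    fun f hf => exists_inverse_mem_Schutz hf, fun x y => ?_⟩
  obtain ⟨f, hf, hfx⟩ := exists_mem_Schutz_apply_eq x y
  exact ⟨f, ⟨hf, hfx⟩, fun g hg => Schutz.eq_of_apply_eq hg.1 hf (hg.2.trans hfx.symm)⟩
end

section
/- Let A be an r×c tropical matrix with full rank and connected bipartite graph B_A. If P, Q ∈ G_A both have 0 as their (unique) tropical eigenvalue, then PQ also has 0 as its unique eigenvalue. -/
open scoped Classical

/-!
Write `P = monomialMatrix σ p`. Each column of the full-column-rank matrix `A` is extremal in
`C(A)`, so `C(PA) = C(A)` makes every column of `PA` a scaled column of `A`: `PA = AM` for a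
monomial matrix `M`. Iterating up to a common period `N` of `σ` and `M` gives `P^N A = AD` with
`D` diagonal, and connectedness of `B_A` forces `P^N` to be a scalar `C`. So every cycle of `P`
has mean `C / N`, which is the unique eigenvalue of `P` and also the mean `(∑ i, p i) / r` of
its finite entries. Since `PQA = A M_P M_Q`, the same holds for `PQ`, and the finite entries of
`PQ` sum to those of `P` plus those of `Q`, that is, to `0`.
-/

open Finset

lemma add_finset_sup {ι : Type*} (s : Finset ι) (a : Trop) (f : ι → Trop) :
    a + s.sup f = s.sup fun k => a + f k :=
  apply_sup_eq_sup_comp_of_linearOrder (a + ·) add_right_mono (WithBot.add_bot a)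

lemma finset_sup_add {ι : Type*} (s : Finset ι) (a : Trop) (f : ι → Trop) :
    s.sup f + a = s.sup fun k => f k + a :=
  apply_sup_eq_sup_comp_of_linearOrder (· + a) add_left_mono (WithBot.bot_add a)

lemma Finset.sup_eq_apply_of_forall_ne {α ι : Type*} [SemilatticeSup α] [OrderBot α]
    {s : Finset ι} {f : ι → α} {j : ι} (hj : j ∈ s) (h : ∀ k ∈ s, k ≠ j → f k = ⊥) :
    s.sup f = f j := by
  refine le_antisymm (Finset.sup_le fun k hk => ?_) (le_sup hj)
  by_cases hkj : k = j
  · rw [hkj]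
  · simp [h k hk hkj]

section genBy

variable {n : ℕ}

lemma subset_genBy (G : Set (Fin n → Trop)) : G ⊆ genBy G :=
  fun _ hx _ hS => hS.2 hx

lemma genBy_subset {G S : Set (Fin n → Trop)} (hS : IsTropSubmodule S) (h : G ⊆ S) :
    genBy G ⊆ S :=
  Set.sInter_subset_of_mem ⟨hS, h⟩

lemma isTropSubmodule_genBy (G : Set (Fin n → Trop)) : IsTropSubmodule (genBy G) :=
  ⟨fun _ hx _ hy S hS => hS.1.1 _ (hx S hS) _ (hy S hS),
    fun c _ hx S hS => hS.1.2 c _ (hx S hS)⟩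

lemma genBy_mono {G H : Set (Fin n → Trop)} (h : G ⊆ H) : genBy G ⊆ genBy H :=
  genBy_subset (isTropSubmodule_genBy H) (h.trans (subset_genBy H))

lemma IsTropSubmodule.finset_sup_mem {ι : Type*} {S : Set (Fin n → Trop)}
    (hS : IsTropSubmodule S) {s : Finset ι} (hs : s.Nonempty) {f : ι → Fin n → Trop}
    (hf : ∀ k ∈ s, f k ∈ S) (d : ι → Trop) : (fun i => s.sup fun k => d k + f k i) ∈ S := by
  induction hs using Finset.Nonempty.cons_induction with
  | singleton a => simpa using hS.2 (d a) (f a) (hf a (mem_singleton_self a))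
  | cons a s ha _ ih =>
    simp only [sup_cons]
    exact hS.1 _ (hS.2 (d a) (f a) (hf a (mem_cons_self a s)))
      _ (ih fun k hk => hf k (mem_cons_of_mem hk))

/-- Only this inclusion holds in general: the empty set counts as a `T`-subsemimodule, so
`genBy ∅ = ∅`. -/
lemma exists_eq_sup_of_mem_genBy {ι : Type*} [Fintype ι] {f : ι → Fin n → Trop}
    {v : Fin n → Trop} (hv : v ∈ genBy {w | ∃ j, w = f j}) :
    ∃ d : ι → Trop, v = fun i => univ.sup fun k => d k + f k i := by
  refine genBy_subset (S := {v | ∃ d : ι → Trop, v = fun i => univ.sup fun k => d k + f k i})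
    ⟨?_, ?_⟩ ?_ hv
  · rintro _ ⟨d, rfl⟩ _ ⟨e, rfl⟩
    refine ⟨d ⊔ e, funext fun i => ?_⟩
    simp only [Pi.sup_apply, ← sup_sup, ← max_add_add_right]
    rfl
  · rintro a _ ⟨d, rfl⟩
    exact ⟨fun k => a + d k, funext fun i => by simp only [add_finset_sup, add_assoc]⟩
  · rintro _ ⟨j, rfl⟩
    refine ⟨fun k => if k = j then ((0 : ℝ) : Trop) else ⊥, funext fun i => ?_⟩
    rw [sup_eq_apply_of_forall_ne (mem_univ j) fun k _ hk => by simp [hk]]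
    simp

end genBy

section ColumnRank

variable {r c : ℕ} {A : Fin r → Fin c → Trop}

lemma col_mem_colSpace (j : Fin c) : (fun i => A i j) ∈ colSpace A :=
  subset_genBy _ ⟨j, rfl⟩

lemma col_not_mem_genBy_other_cols (hcol : colRank A = c) (j : Fin c) :
    (fun i => A i j) ∉ genBy {v | ∃ m ≠ j, v = fun i => A i m} := by
  intro hmem
  set G := (univ.erase j).image fun m i => A i m
  have hG : (G : Set (Fin r → Trop)) = {v | ∃ m ≠ j, v = fun i => A i m} := by
    ext v
    simp [G, eq_comm]
  have hspan : genBy ↑G = colSpace A := by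
    rw [hG]
    refine subset_antisymm (genBy_mono ?_) (genBy_subset (isTropSubmodule_genBy _) ?_)
    · rintro _ ⟨m, -, rfl⟩
      exact ⟨m, rfl⟩
    · rintro _ ⟨m, rfl⟩
      by_cases hm : m = j
      · rwa [hm]
      · exact subset_genBy _ ⟨m, hm, rfl⟩
  have hle : colRank A ≤ G.card := Nat.sInf_le ⟨G, rfl, hspan⟩
  have hcard : G.card ≤ c - 1 := by
    simpa using card_image_le (s := univ.erase j) (f := fun m i => A i m)
  have := j.pos
  omega

lemma col_ne_sup_erase (hcol : colRank A = c) {j : Fin c} (hj : ∃ i, A i j ≠ ⊥)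
    (E : Fin c → Trop) :
    (fun i => A i j) ≠ fun i => (univ.erase j).sup fun m => E m + A i m := by
  intro h
  apply col_not_mem_genBy_other_cols hcol j
  rcases (univ.erase j).eq_empty_or_nonempty with hemp | hne
  · obtain ⟨i, hi⟩ := hj
    exact absurd (by simpa [hemp] using congrFun h i) hi
  · rw [h]
    exact (isTropSubmodule_genBy _).finset_sup_mem hne
      (f := fun m i => A i m)
      (fun m hm => subset_genBy _ (by exact ⟨m, (mem_erase.1 hm).1, rfl⟩)) E

/-- A coefficient `< 0` would express column `j` through the other columns, and one `> 0` is
impossible at a finite entry. -/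
lemma coeff_self_eq_zero (hcol : colRank A = c) {j : Fin c} (hj : ∃ i, A i j ≠ ⊥)
    {E : Fin c → Trop} (hE : ∀ i, A i j = univ.sup fun m => E m + A i m) :
    E j = ((0 : ℝ) : Trop) := by
  have hterm : ∀ i, E j + A i j ≤ A i j := fun i =>
    (hE i).symm ▸ le_sup (f := fun m => E m + A i m) (mem_univ j)
  have hle : E j ≤ ((0 : ℝ) : Trop) := by
    obtain ⟨i₀, hi₀⟩ := hj
    exact WithBot.le_of_add_le_add_right hi₀ (by simpa using hterm i₀)
  refine hle.eq_or_lt.resolve_right fun hlt => col_ne_sup_erase hcol hj E (funext fun i => ?_)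
  have hsplit := hE i
  rw [← insert_erase (mem_univ j), sup_insert] at hsplit
  by_cases hbot : A i j = ⊥
  · rw [hbot] at hsplit ⊢
    exact le_bot_iff.1 (hsplit ▸ le_sup_right) |>.symm
  · lift A i j to ℝ using hbot with b hb
    have hj_lt : E j + b < b := by
      simpa using WithBot.add_lt_add_right (WithBot.coe_ne_bot (a := b)) hlt
    rcases le_total (E j + b) ((univ.erase j).sup fun m => E m + A i m) with hle' | hle'
    · rwa [sup_eq_right.2 hle'] at hsplit
    · rw [sup_eq_left.2 hle'] at hsplit
      exact absurd hsplit.symm hj_lt.ne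

/-- Expanding column `j` through the columns of `B`, and these through the columns of `A`,
gives column `j` with coefficient `0`; a term realising that `0` singles out the column of `B`. -/
lemma exists_col_eq_add_col {c' : ℕ} (hcol : colRank A = c)
    {B : Fin r → Fin c' → Trop} (hB : colSpace B = colSpace A) {j : Fin c}
    (hj : ∃ i, A i j ≠ ⊥) : ∃ (k : Fin c') (d : ℝ), ∀ i, A i j = (d : Trop) + B i k := by
  obtain ⟨d, hd⟩ := exists_eq_sup_of_mem_genBy (hB ▸ col_mem_colSpace (A := A) j)
  choose e he using fun k => exists_eq_sup_of_mem_genBy (hB ▸ col_mem_colSpace (A := B) k)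
  set E : Fin c → Trop := fun m => univ.sup fun k => d k + e k m
  have hE : ∀ i, A i j = univ.sup fun m => E m + A i m := fun i => by
    calc A i j = univ.sup fun k => univ.sup fun m => d k + (e k m + A i m) := by
          simp only [congrFun hd i, congrFun (he _) i, add_finset_sup]
      _ = univ.sup fun m => E m + A i m := by
          rw [Finset.sup_comm]
          simp only [E, finset_sup_add, add_assoc]
  have hEj := coeff_self_eq_zero hcol hj hE
  obtain ⟨k₀, -⟩ := Finset.lt_sup_iff.1 (hEj ▸ WithBot.bot_lt_coe 0 : ⊥ < E j)
  obtain ⟨k, -, hk⟩ := exists_mem_eq_sup univ ⟨k₀, mem_univ k₀⟩ fun k => d k + e k j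
  obtain ⟨δ, ε, hδ, hε, hδε⟩ := WithBot.add_eq_coe.1 (hk.symm.trans hEj)
  refine ⟨k, δ, fun i => le_antisymm ?_ ?_⟩
  · calc A i j = ((δ + ε : ℝ) : Trop) + A i j := by simp [hδε]
      _ ≤ (δ : Trop) + B i k := by
          rw [WithBot.coe_add, add_assoc, hε, congrFun (he k) i]
          gcongr
          exact le_sup (f := fun m => e k m + A i m) (mem_univ j)
  · rw [congrFun hd i, hδ]
    exact le_sup (f := fun k => d k + B i k) (mem_univ k)

end ColumnRank

section Monomial

variable {n : ℕ}

def monomialMatrix (σ : Equiv.Perm (Fin n)) (p : Fin n → ℝ) : Fin n → Fin n → Trop :=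
  fun i m => if m = σ i then (p i : Trop) else ⊥

lemma IsMonomial.exists_eq_monomialMatrix {P : Fin n → Fin n → Trop} (hP : IsMonomial P) :
    ∃ (σ : Equiv.Perm (Fin n)) (p : Fin n → ℝ), P = monomialMatrix σ p := by
  choose σ hσ hσ_uniq using hP.1
  have hinj : σ.Injective := fun i i' h =>
    (hP.2 (σ i)).unique (hσ i) (h ▸ hσ i')
  refine ⟨Equiv.ofBijective σ hinj.bijective_of_finite, fun i => (P i (σ i)).unbotD 0,
    funext fun i => funext fun m => ?_⟩
  by_cases hm : m = σ i
  · subst hm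
    obtain ⟨a, ha⟩ := WithBot.ne_bot_iff_exists.1 (hσ i)
    simp [monomialMatrix, ← ha]
  · simpa [monomialMatrix, hm] using fun h => hm (hσ_uniq i m h)

lemma tvmul_monomialMatrix (σ : Equiv.Perm (Fin n)) (p : Fin n → ℝ) (v : Fin n → Trop)
    (i : Fin n) : tvmul (monomialMatrix σ p) v i = (p i : Trop) + v (σ i) := by
  rw [tvmul, sup_eq_apply_of_forall_ne (mem_univ (σ i)) fun k _ hk => by
    simp [monomialMatrix, hk]]
  simp [monomialMatrix]

lemma tmul_monomialMatrix_apply {m : ℕ} (σ : Equiv.Perm (Fin n)) (p : Fin n → ℝ)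
    (A : Fin n → Fin m → Trop) (i : Fin n) (k : Fin m) :
    tmul (monomialMatrix σ p) A i k = (p i : Trop) + A (σ i) k :=
  tvmul_monomialMatrix σ p (fun l => A l k) i

lemma monomialMatrix_tmul_monomialMatrix (σ τ : Equiv.Perm (Fin n)) (p q : Fin n → ℝ) :
    tmul (monomialMatrix σ p) (monomialMatrix τ q)
      = monomialMatrix (σ.trans τ) fun i => p i + q (σ i) := by
  ext i m
  rw [tmul_monomialMatrix_apply]
  by_cases hm : m = τ (σ i) <;> simp [monomialMatrix, hm]

end Monomial

section OrbitSum

variable {n : ℕ} (σ : Equiv.Perm (Fin n)) (p : Fin n → ℝ)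

def orbitSum (t : ℕ) (i : Fin n) : ℝ :=
  ∑ s ∈ range t, p ((σ ^ s) i)

lemma orbitSum_succ (t : ℕ) (i : Fin n) :
    orbitSum σ p (t + 1) i = p i + orbitSum σ p t (σ i) := by
  simp only [orbitSum, sum_range_succ', pow_succ, Equiv.Perm.mul_apply, pow_zero,
    Equiv.Perm.one_apply]
  ring

lemma sum_orbitSum (t : ℕ) : ∑ i, orbitSum σ p t i = t * ∑ i, p i := by
  simp only [orbitSum]
  rw [sum_comm]
  simp [Equiv.sum_comp]

lemma sum_orbitSum_range_apply (N : ℕ) (i : Fin n) :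
    ∑ t ∈ range N, orbitSum σ p t (σ i)
      = ∑ t ∈ range N, orbitSum σ p t i + orbitSum σ p N i - N * p i := by
  have h := sum_range_succ' (fun t => orbitSum σ p t i) N
  rw [sum_range_succ] at h
  simp only [orbitSum_succ, sum_add_distrib, sum_const, card_range, nsmul_eq_mul] at h
  simp only [orbitSum, range_zero, sum_empty] at h ⊢
  linarith

variable {σ p}

lemma isEig_monomialMatrix (hn : 0 < n) {N : ℕ} (hN : N ≠ 0) {C : ℝ}
    (hC : ∀ i, orbitSum σ p N i = C) : IsEig (monomialMatrix σ p) ((C / N : ℝ) : Trop) := by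
  refine ⟨fun i => ((∑ t ∈ range N, orbitSum σ p t i) / N : ℝ), ?_, funext fun i => ?_⟩
  · exact Function.ne_iff.2 ⟨⟨0, hn⟩, WithBot.coe_ne_bot⟩
  · rw [tvmul_monomialMatrix, ← WithBot.coe_add, ← WithBot.coe_add, WithBot.coe_inj,
      sum_orbitSum_range_apply, hC]
    field_simp
    ring

lemma orbitSum_add_apply_pow {v : Fin n → Trop} {m : ℝ}
    (hv : ∀ i, (p i : Trop) + v (σ i) = (m : Trop) + v i) (t : ℕ) (i : Fin n) :
    (orbitSum σ p t i : Trop) + v ((σ ^ t) i) = ((t * m : ℝ) : Trop) + v i := by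
  induction t generalizing i with
  | zero => simp [orbitSum]
  | succ t ih =>
    rw [orbitSum_succ, pow_succ, Equiv.Perm.mul_apply, WithBot.coe_add, add_assoc, ih,
      add_left_comm, hv, ← add_assoc, ← WithBot.coe_add, Nat.cast_succ, add_one_mul]

lemma eq_of_isEig_monomialMatrix {N : ℕ} (hσ : σ ^ N = 1) (hN : N ≠ 0) {C : ℝ}
    (hC : ∀ i, orbitSum σ p N i = C) {μ : Trop} (hμ : IsEig (monomialMatrix σ p) μ) :
    μ = ((C / N : ℝ) : Trop) := by
  obtain ⟨v, hv, hvμ⟩ := hμ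
  have hv' : ∀ i, (p i : Trop) + v (σ i) = μ + v i := fun i => by
    rw [← tvmul_monomialMatrix, hvμ]
  obtain ⟨i₀, hi₀⟩ := Function.ne_iff.1 hv
  have hμ_ne : μ ≠ ⊥ := by
    rintro rfl
    simpa [hi₀] using hv' (σ.symm i₀)
  lift μ to ℝ using hμ_ne
  have h := orbitSum_add_apply_pow hv' N i₀
  rw [hσ, Equiv.Perm.one_apply, hC, WithBot.add_right_inj hi₀, WithBot.coe_inj] at h
  rw [WithBot.coe_inj, h]
  field_simp

end OrbitSum

section Intertwining

variable {r c : ℕ} {A : Fin r → Fin c → Trop}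

lemma BConnected.exists_ne_bot (hconn : BConnected A) (hr : 0 < r) (j : Fin c) :
    ∃ i, A i j ≠ ⊥ := by
  rcases (hconn (Sum.inr j) (Sum.inl ⟨0, hr⟩)).cases_head with h | ⟨x, hx, -⟩
  · exact absurd h Sum.inr_ne_inl
  · cases x with
    | inl i => exact ⟨i, hx⟩
    | inr _ => exact hx.elim

lemma BConnected.eq_of_forall_ne_bot {α : Type*} (hconn : BConnected A) {f : Fin r → α}
    {g : Fin c → α} (hfg : ∀ i k, A i k ≠ ⊥ → f i = g k) (i i' : Fin r) : f i = f i' := by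
  have hstep : ∀ x y, BAdj A x y → Sum.elim f g x = Sum.elim f g y := by
    rintro (x | x) (y | y) hxy
    exacts [hxy.elim, hfg x y hxy, (hfg y x hxy).symm, hxy.elim]
  have hpath : ∀ {x y}, Relation.ReflTransGen (BAdj A) x y →
      Sum.elim f g x = Sum.elim f g y := by
    intro x y hxy
    induction hxy with
    | refl => rfl
    | tail _ hyz ih => exact ih.trans (hstep _ _ hyz)
  exact hpath (hconn (Sum.inl i) (Sum.inl i'))

/-- `monomialMatrix σ p ⊗ A = A ⊗ M`, where `M` is the monomial matrix with entry `w k` in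
position `(π k, k)`. -/
def Intertwines (A : Fin r → Fin c → Trop) (σ : Equiv.Perm (Fin r)) (p : Fin r → ℝ)
    (π : Equiv.Perm (Fin c)) (w : Fin c → ℝ) : Prop :=
  ∀ i k, (p i : Trop) + A (σ i) k = (w k : Trop) + A i (π k)

variable {σ σ' : Equiv.Perm (Fin r)} {p p' : Fin r → ℝ} {π π' : Equiv.Perm (Fin c)}
  {w w' : Fin c → ℝ}

lemma Intertwines.trans (h : Intertwines A σ p π w) (h' : Intertwines A σ' p' π' w') :
    Intertwines A (σ.trans σ') (fun i => p i + p' (σ i)) (π'.trans π)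
      (fun k => w' k + w (π' k)) := by
  intro i k
  simp only [Equiv.trans_apply, WithBot.coe_add]
  rw [add_assoc, h', add_left_comm, h, add_assoc]

lemma Intertwines.pow (h : Intertwines A σ p π w) (t : ℕ) :
    ∃ w', Intertwines A (σ ^ t) (orbitSum σ p t) (π ^ t) w' := by
  induction t with
  | zero => exact ⟨0, fun i k => by simp [orbitSum]⟩
  | succ t ih =>
    obtain ⟨w', hw'⟩ := ih
    rw [pow_succ, pow_succ', Equiv.Perm.mul_def, Equiv.Perm.mul_def,
      funext (orbitSum_succ σ p t)]
    exact ⟨_, h.trans hw'⟩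

lemma Intertwines.exists_orbitSum_eq (hconn : BConnected A) (h : Intertwines A σ p π w) :
    ∃ N ≠ 0, σ ^ N = 1 ∧ ∀ i i', orbitSum σ p N i = orbitSum σ p N i' := by
  set N := orderOf σ * orderOf π
  have hσ : σ ^ N = 1 := orderOf_dvd_iff_pow_eq_one.1 (dvd_mul_right _ _)
  have hπ : π ^ N = 1 := orderOf_dvd_iff_pow_eq_one.1 (dvd_mul_left _ _)
  obtain ⟨w', hw'⟩ := h.pow N
  refine ⟨N, (Nat.mul_pos (orderOf_pos σ) (orderOf_pos π)).ne', hσ,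
    hconn.eq_of_forall_ne_bot (g := w') fun i k hik => ?_⟩
  have := hw' i k
  rw [hσ, hπ, Equiv.Perm.one_apply, Equiv.Perm.one_apply] at this
  exact WithBot.coe_inj.1 (WithBot.add_right_cancel hik this)

lemma Intertwines.isEig_iff (hconn : BConnected A) (hr : 0 < r) (h : Intertwines A σ p π w)
    {μ : Trop} : IsEig (monomialMatrix σ p) μ ↔ μ = (((∑ i, p i) / r : ℝ) : Trop) := by
  obtain ⟨N, hN, hσ, hC⟩ := h.exists_orbitSum_eq hconn
  have hC' := fun i => hC i ⟨0, hr⟩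
  have hmean : orbitSum σ p N ⟨0, hr⟩ / N = (∑ i, p i) / r := by
    have := sum_orbitSum σ p N
    simp only [hC', sum_const, card_univ, Fintype.card_fin, nsmul_eq_mul] at this
    field_simp
    linarith
  rw [← hmean]
  exact ⟨eq_of_isEig_monomialMatrix hσ hN hC', fun hμ => hμ ▸ isEig_monomialMatrix hr hN hC'⟩

lemma exists_intertwines_of_colSpace_eq (hcol : colRank A = c) (hconn : BConnected A)
    (hr : 0 < r) (h : colSpace (tmul (monomialMatrix σ p) A) = colSpace A) :
    ∃ π w, Intertwines A σ p π w := by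
  choose τ δ hτ using fun j => exists_col_eq_add_col hcol h (hconn.exists_ne_bot hr j)
  simp only [tmul_monomialMatrix_apply] at hτ
  have hinj : τ.Injective := by
    intro j j' hjj'
    by_contra hne
    apply col_not_mem_genBy_other_cols hcol j
    have hcol_j : (fun i => A i j) = fun i => ((δ j - δ j' : ℝ) : Trop) + A i j' :=
      funext fun i => by
        rw [hτ j i, hτ j' i, hjj', ← add_assoc _ (δ j' : Trop), ← WithBot.coe_add,
          sub_add_cancel]
    rw [hcol_j]
    exact (isTropSubmodule_genBy _).2 _ _ (subset_genBy _ ⟨j', Ne.symm hne, rfl⟩)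
  set τe := Equiv.ofBijective τ hinj.bijective_of_finite
  refine ⟨τe.symm, fun k => -δ (τe.symm k), fun i k => ?_⟩
  rw [hτ (τe.symm k) i, ← add_assoc, ← WithBot.coe_add, neg_add_cancel, WithBot.coe_zero,
    zero_add]
  exact congrArg _ (congrArg _ (τe.apply_symm_apply k)).symm

end Intertwining

theorem stmt_9_general {r c : ℕ} (A : Fin r → Fin c → Trop)
    (hc : colRank A = c) (hconn : BConnected A)
    (P Q : Fin r → Fin r → Trop) (hP : P ∈ GA A) (hQ : Q ∈ GA A)
    (hP0 : IsEig P ((0 : ℝ) : Trop)) (hQ0 : IsEig Q ((0 : ℝ) : Trop)) :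
    IsEig (tmul P Q) ((0 : ℝ) : Trop) ∧
      ∀ mu : Trop, IsEig (tmul P Q) mu → mu = ((0 : ℝ) : Trop) := by
  have hr : 0 < r := by
    obtain ⟨v, hv, -⟩ := hP0
    obtain ⟨i, -⟩ := Function.ne_iff.1 hv
    exact i.pos
  obtain ⟨σ, p, rfl⟩ := hP.1.exists_eq_monomialMatrix
  obtain ⟨τ, q, rfl⟩ := hQ.1.exists_eq_monomialMatrix
  obtain ⟨π, w, hPA⟩ := exists_intertwines_of_colSpace_eq hc hconn hr hP.2
  obtain ⟨π', w', hQA⟩ := exists_intertwines_of_colSpace_eq hc hconn hr hQ.2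
  rw [hPA.isEig_iff hconn hr, WithBot.coe_inj] at hP0
  rw [hQA.isEig_iff hconn hr, WithBot.coe_inj] at hQ0
  have hmean : (∑ i, (p i + q (σ i))) / r = 0 := by
    rw [sum_add_distrib, Equiv.sum_comp σ q, add_div, ← hP0, ← hQ0, add_zero]
  simp [monomialMatrix_tmul_monomialMatrix, (hPA.trans hQA).isEig_iff hconn hr, hmean]

/-- If `A` is `r × c` of full rank with connected `B_A`, and
`P, Q ∈ G_A` both have `0` as an eigenvalue, then `PQ` has `0` as its unique eigenvalue. -/
theorem stmt_9 {r c : ℕ} (A : Fin r → Fin c → Trop)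
    (hr : rowRank A = r) (hc : colRank A = c) (hconn : BConnected A)
    (P Q : Fin r → Fin r → Trop) (hP : P ∈ GA A) (hQ : Q ∈ GA A)
    (hP0 : IsEig P ((0 : ℝ) : Trop)) (hQ0 : IsEig Q ((0 : ℝ) : Trop)) :
    IsEig (tmul P Q) ((0 : ℝ) : Trop) ∧
      ∀ mu : Trop, IsEig (tmul P Q) mu → mu = ((0 : ℝ) : Trop) :=
  stmt_9_general A hc hconn P Q hP hQ hP0 hQ0
end

section
/- Let E ∈ M_n(T) be a full rank tropical idempotent, let N < -Σ_{i,j with E_{ij} finite} |E_{ij}|, and for m ∈ ℕ let F_m be the idempotent power of the matrix obtained by replacing every -∞ entry of E with m·N. Then each F_m is a full rank idempotent over the finitary tropical semiring ℝ, with explicit entries (F_m)_{ij} = E_{ij} if E_{ij} ≠ -∞ and (F_m)_{ij} = max_t E_{it} + mN + max_s E_{sj} otherwise; moreover C(F_m) ⊆ C(F_{m+1}) for all m, and C(E) ∩ ℝ^n = ⋃_m (C(F_m) \ {(-∞,...,-∞)}). -/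
open scoped Classical

/-- Tropical matrix power: `tpow A 0 = I`, `tpow A (t+1) = A ⊗ tpow A t`. -/
def tpow {n : ℕ} (A : Fin n → Fin n → Trop) : ℕ → (Fin n → Fin n → Trop)
  | 0 => tId n
  | t + 1 => tmul A (tpow A t)

/-
Because `E` is a full rank idempotent its diagonal vanishes, so each row maximum `R i` and
column maximum `C j` of `E` lies in `[0, Σ]`. After replacing `-∞` by `c ≤ -Σ`, a heaviest path
from `i` to `j` either stays among finite entries, where idempotency bounds it by `E i j`, or
uses a filled entry, and then it weighs at most `R i + c + C j`; this is below `E i j` whenever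
`E i j` is finite, and it is attained through the maximal entries of row `i` and column `j`.
Hence the entry formula. The resulting idempotent has zero diagonal and `F i k + F k i < 0` for
`i ≠ k` (from the full rank of `E` on finite entries, from `c < -Σ` otherwise), so its rows, and
its columns, are pairwise non-proportional extremal vectors, and both ranks are `n`. Finally
`F (m+1) ⊗ F m = F m` and `E ⊗ F m = F m` give the inclusions of column spaces, and a finite
vector `E ⊗ d` equals `F m ⊗ d` as soon as `m N` is negative enough.
-/

open Finset Filter
open scoped Matrix

namespace Trop

lemma add_finset_sup {ι : Type*} (a : Trop) (s : Finset ι) (f : ι → Trop) :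
    a + s.sup f = s.sup fun k => a + f k :=
  apply_sup_eq_sup_comp_of_linearOrder (a + ·) (fun _ _ h => add_le_add_right h a)
    (WithBot.add_bot a)

lemma eq_bot_of_eq_add {x e : Trop} (he : e < 0) (h : x = e + x) : x = ⊥ := by
  induction x using WithBot.recBotCoe with
  | bot => rfl
  | coe a =>
    induction e using WithBot.recBotCoe with
    | bot => simp at h
    | coe b =>
      have : a = b + a := by exact_mod_cast h
      have : b < 0 := by exact_mod_cast he
      linarith

section Matrix

variable {n m p : ℕ}

lemma add_le_tmul (A : Fin n → Fin m → Trop) (B : Fin m → Fin p → Trop) (i : Fin n) (k : Fin m)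
    (j : Fin p) : A i k + B k j ≤ tmul A B i j :=
  le_sup (f := fun k => A i k + B k j) (mem_univ k)

lemma tmul_le_iff {A : Fin n → Fin m → Trop} {B : Fin m → Fin p → Trop} {i : Fin n} {j : Fin p}
    {x : Trop} : tmul A B i j ≤ x ↔ ∀ k, A i k + B k j ≤ x := by
  simp [tmul]

lemma transpose_tmul (A : Fin n → Fin m → Trop) (B : Fin m → Fin p → Trop) :
    (tmul A B)ᵀ = tmul Bᵀ Aᵀ := by
  funext j i
  show (univ.sup fun k => A i k + B k j) = univ.sup fun k => B k j + A i k
  exact sup_congr rfl fun k _ => add_comm (A i k) (B k j)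

lemma tmul_eq_right {A B : Fin n → Fin n → Trop} (hB : ∀ i, B i i = 0)
    (h : ∀ i k j, B i k + A k j ≤ A i j) : tmul B A = A := by
  ext i j
  refine le_antisymm (tmul_le_iff.2 fun k => h i k j) ?_
  simpa [hB i] using add_le_tmul B A i i j

lemma tmul_apply_of_subsingleton [Subsingleton (Fin m)] (A : Fin n → Fin m → Trop)
    (B : Fin m → Fin p → Trop) (i : Fin n) (k : Fin m) (j : Fin p) :
    tmul A B i j = A i k + B k j :=
  le_antisymm (tmul_le_iff.2 fun l => by rw [Subsingleton.elim l k]) (add_le_tmul A B i k j)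

lemma tpow_le {A G : Fin n → Fin n → Trop} (h0 : tId n ≤ G) (h : ∀ i k j, A i k + G k j ≤ G i j) :
    ∀ t, tpow A t ≤ G
  | 0 => h0
  | t + 1 => fun i j => tmul_le_iff.2 fun k =>
    (add_le_add_right (tpow_le h0 h t k j) _).trans (h i k j)

lemma diag_nonneg_tpow {A : Fin n → Fin n → Trop} (hA : ∀ i, 0 ≤ A i i) :
    ∀ t i, 0 ≤ tpow A t i i
  | 0, i => by simp [tpow, tId]
  | t + 1, i => (add_nonneg (hA i) (diag_nonneg_tpow hA t i)).trans (add_le_tmul _ _ i i i)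

lemma le_tpow {A : Fin n → Fin n → Trop} (hA : ∀ i, 0 ≤ A i i) {t : ℕ} (ht : 1 ≤ t) :
    A ≤ tpow A t := by
  obtain ⟨s, rfl⟩ := Nat.exists_eq_add_of_le' ht
  exact fun i j => (le_add_of_nonneg_right (diag_nonneg_tpow hA s j)).trans (add_le_tmul _ _ i j j)

lemma tpow_apply_of_subsingleton [Subsingleton (Fin n)] (A : Fin n → Fin n → Trop) (i : Fin n)
    {a : ℝ} (ha : A i i = a) : ∀ t : ℕ, tpow A t i i = ((t * a : ℝ) : Trop)
  | 0 => by simp [tpow, tId]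
  | t + 1 => by
    rw [tpow, tmul_apply_of_subsingleton _ _ i i i, tpow_apply_of_subsingleton A i ha t, ha]
    norm_cast
    push_cast
    ring

end Matrix

section Span

variable {n m : ℕ}

lemma isTropSubmodule_genBy (G : Set (Fin n → Trop)) : IsTropSubmodule (genBy G) :=
  ⟨fun _ hx _ hy S hS => hS.1.1 _ (hx S hS) _ (hy S hS),
    fun c _ hx S hS => hS.1.2 c _ (hx S hS)⟩

lemma subset_genBy (G : Set (Fin n → Trop)) : G ⊆ genBy G := fun _ hx _ hS => hS.2 hx

lemma genBy_subset {G S : Set (Fin n → Trop)} (hS : IsTropSubmodule S) (h : G ⊆ S) :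
    genBy G ⊆ S := fun _ hx => hx S ⟨hS, h⟩

lemma genBy_empty : genBy (∅ : Set (Fin n → Trop)) = ∅ :=
  Set.subset_empty_iff.1 <| genBy_subset ⟨fun _ hx => hx.elim, fun _ _ hx => hx.elim⟩ le_rfl

lemma IsTropSubmodule.finset_sup_mem {S : Set (Fin n → Trop)} (hS : IsTropSubmodule S)
    {ι : Type*} {s : Finset ι} (hs : s.Nonempty) {v : ι → Fin n → Trop} (hv : ∀ k ∈ s, v k ∈ S) :
    (fun i => s.sup fun k => v k i) ∈ S := by
  induction hs using Nonempty.cons_induction with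
  | singleton a => simpa using hv a (mem_singleton_self a)
  | cons a s ha _ ih =>
    have hsplit : (fun i => (cons a s ha).sup fun k => v k i) =
        v a ⊔ fun i => s.sup fun k => v k i := by
      funext i; simp
    rw [hsplit]
    exact hS.1 _ (hv a (mem_cons_self a s)) _ (ih fun k hk => hv k (mem_cons_of_mem hk))

lemma genBy_subset_span {ι : Type*} (s : Finset ι) (v : ι → Fin n → Trop) {G : Set (Fin n → Trop)}
    (hG : G ⊆ v '' s) :
    genBy G ⊆ {x | ∃ d : ι → Trop, x = fun i => s.sup fun k => v k i + d k} := by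
  classical
  refine genBy_subset ⟨?_, ?_⟩ ?_
  · rintro _ ⟨d, rfl⟩ _ ⟨d', rfl⟩
    refine ⟨d ⊔ d', funext fun i => ?_⟩
    simp only [Pi.sup_apply, ← sup_sup]
    exact sup_congr rfl fun k _ => (add_max _ _ _).symm
  · rintro c _ ⟨d, rfl⟩
    refine ⟨fun k => c + d k, funext fun i => ?_⟩
    simp only [add_finset_sup, add_left_comm]
  · rintro _ hx
    obtain ⟨k, hk, rfl⟩ := hG hx
    refine ⟨fun l => if l = k then 0 else ⊥, funext fun i => le_antisymm ?_ ?_⟩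
    · simpa using le_sup (f := fun l => v l i + if l = k then (0 : Trop) else ⊥) hk
    · exact Finset.sup_le fun l _ => by dsimp only; split_ifs with h <;> simp [h]

lemma colSpace_subset_range (A : Fin n → Fin m → Trop) : colSpace A ⊆ Set.range (tvmul A) := by
  intro x hx
  obtain ⟨d, rfl⟩ := genBy_subset_span univ (fun k i => A i k)
    (by rintro _ ⟨j, rfl⟩; exact ⟨j, mem_univ j, rfl⟩) hx
  exact ⟨d, rfl⟩

lemma tvmul_mem_colSpace [Nonempty (Fin m)] (A : Fin n → Fin m → Trop) (d : Fin m → Trop) :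
    tvmul A d ∈ colSpace A := by
  have h := IsTropSubmodule.finset_sup_mem (isTropSubmodule_genBy {v | ∃ j, v = fun i => A i j})
    (univ_nonempty (α := Fin m)) (v := fun k i => d k + A i k)
    fun k _ => (isTropSubmodule_genBy _).2 (d k) _ (subset_genBy _ ⟨k, rfl⟩)
  simp only [add_comm] at h
  exact h

lemma nonempty_of_mem_colSpace {A : Fin n → Fin m → Trop} {x : Fin n → Trop} (hx : x ∈ colSpace A) :
    Nonempty (Fin m) := by
  by_contra h
  have hcols : {v | ∃ j, v = fun i => A i j} = ∅ :=
    Set.eq_empty_of_forall_notMem fun _ ⟨j, _⟩ => h ⟨j⟩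
  rw [colSpace, hcols, genBy_empty] at hx
  exact hx

lemma colSpace_subset_colSpace {A B : Fin n → Fin n → Trop} (h : tmul B A = A) :
    colSpace A ⊆ colSpace B := by
  refine genBy_subset (isTropSubmodule_genBy _) ?_
  rintro _ ⟨j, rfl⟩
  have : Nonempty (Fin n) := ⟨j⟩
  have hcol : (fun i => A i j) = tvmul B fun k => A k j := by
    conv_lhs => rw [← h]
    rfl
  rw [hcol]
  exact tvmul_mem_colSpace B _

lemma eq_bot_or_forall_ne_bot_of_mem_colSpace {A : Fin n → Fin m → Trop} (hA : ∀ i j, A i j ≠ ⊥)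
    {x : Fin n → Trop} (hx : x ∈ colSpace A) : x = (fun _ => ⊥) ∨ ∀ i, x i ≠ ⊥ := by
  refine genBy_subset (S := {x | x = (fun _ => ⊥) ∨ ∀ i, x i ≠ ⊥}) ⟨?_, ?_⟩ ?_ hx
  · rintro x (rfl | hx) y (rfl | hy)
    · exact Or.inl (funext fun _ => bot_sup_eq _)
    · exact Or.inr fun i => by simpa using hy i
    · exact Or.inr fun i => by simpa using hx i
    · exact Or.inr fun i => by simp [hx i]
  · rintro c x (rfl | hx)
    · exact Or.inl (funext fun _ => WithBot.add_bot c)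
    · by_cases hc : c = ⊥
      · exact Or.inl (funext fun i => by simp [hc])
      · exact Or.inr fun i => WithBot.add_ne_bot.2 ⟨hc, hx i⟩
  · rintro _ ⟨j, rfl⟩
    exact Or.inr fun i => hA i j

end Span

section Rank

variable {n m : ℕ}

lemma add_le_of_tmul_self {E : Fin n → Fin n → Trop} (hidem : tmul E E = E) (i k j : Fin n) :
    E i k + E k j ≤ E i j :=
  (add_le_tmul E E i k j).trans_eq (congrFun (congrFun hidem i) j)

lemma genBy_image_rows (A : Fin n → Fin m → Trop) (s : Finset (Fin n))
    (h : ∀ i, (fun j => A i j) ∈ genBy ((fun k j => A k j) '' s)) :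
    genBy ↑(s.image fun k j => A k j) = rowSpace A := by
  classical
  rw [coe_image]
  refine le_antisymm (genBy_subset (isTropSubmodule_genBy _) ?_)
    (genBy_subset (isTropSubmodule_genBy _) ?_)
  · rintro _ ⟨k, -, rfl⟩
    exact subset_genBy _ ⟨k, rfl⟩
  · rintro _ ⟨i, rfl⟩
    exact h i

lemma rowRank_le_card (A : Fin n → Fin m → Trop) (s : Finset (Fin n))
    (h : ∀ i, (fun j => A i j) ∈ genBy ((fun k j => A k j) '' s)) : rowRank A ≤ s.card := by
  classical
  exact (Nat.sInf_le (Set.mem_ofPred.2 ⟨_, rfl, genBy_image_rows A s h⟩)).trans card_image_le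

lemma exists_card_eq_rowRank (A : Fin n → Fin m → Trop) :
    ∃ G : Finset (Fin m → Trop), G.card = rowRank A ∧ genBy ↑G = rowSpace A := by
  classical
  exact Nat.sInf_mem (s := {k | ∃ G : Finset (Fin m → Trop), G.card = k ∧ genBy ↑G = rowSpace A})
    ⟨_, _, rfl, genBy_image_rows A univ fun i => subset_genBy _ ⟨i, by simp, rfl⟩⟩

lemma rowRank_lt_of_mem_genBy (A : Fin n → Fin m → Trop) (i : Fin n)
    (h : (fun j => A i j) ∈ genBy ((fun k j => A k j) '' ↑(univ.erase i))) : rowRank A < n := by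
  refine (rowRank_le_card A (univ.erase i) fun k => ?_).trans_lt ?_
  · by_cases hk : k = i
    · exact hk ▸ h
    · exact subset_genBy _ ⟨k, by simp [hk], rfl⟩
  · rw [card_erase_of_mem (mem_univ i), card_univ, Fintype.card_fin]
    exact Nat.sub_lt i.pos one_pos

/-- In a full rank idempotent, `E i k + E k i = 0` would make row `k` a multiple of row `i`. -/
lemma eq_of_add_eq_zero_of_rowRank_eq {E : Fin n → Fin n → Trop} (hidem : tmul E E = E)
    (hfull : rowRank E = n) {i k : Fin n} (h : E i k + E k i = 0) : i = k := by
  by_contra hik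
  have hrow : (fun j => E k j) = fun j => E k i + E i j := by
    refine funext fun j => le_antisymm ?_ (add_le_of_tmul_self hidem k i j)
    calc E k j = (E k i + E i k) + E k j := by rw [add_comm (E k i), h, zero_add]
      _ = E k i + (E i k + E k j) := add_assoc _ _ _
      _ ≤ E k i + E i j := add_le_add_right (add_le_of_tmul_self hidem i k j) _
  refine hfull.not_lt (rowRank_lt_of_mem_genBy E k ?_)
  rw [hrow]
  exact (isTropSubmodule_genBy _).2 _ _ (subset_genBy _ ⟨i, by simp [hik], rfl⟩)

lemma diag_eq_zero_of_rowRank_eq {E : Fin n → Fin n → Trop} (hidem : tmul E E = E)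
    (hfull : rowRank E = n) {i k : Fin n} (hki : k ≠ i) : E i i = 0 := by
  by_contra hne
  have hneg : E i i < 0 := by
    have hle := add_le_of_tmul_self hidem i i i
    induction h : E i i using WithBot.recBotCoe with
    | bot => exact WithBot.bot_lt_coe 0
    | coe a =>
      rw [h] at hle hne
      have : a + a ≤ a := by exact_mod_cast hle
      have : a ≠ 0 := fun ha => hne (by rw [ha]; rfl)
      exact_mod_cast (show a < 0 by grind)
  -- since `E i i < 0`, the term `k = i` of `(E ⊗ E) i j` is redundant
  have hrow : (fun j => E i j) = fun j => (univ.erase i).sup fun k => E i k + E k j := by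
    refine funext fun j => ?_
    have hsplit : E i j = (E i i + E i j) ⊔ (univ.erase i).sup fun k => E i k + E k j := by
      conv_lhs => rw [← hidem]; unfold tmul; rw [← insert_erase (mem_univ i), sup_insert]
    rcases le_total (E i i + E i j) ((univ.erase i).sup fun k => E i k + E k j) with h | h
    · rwa [sup_eq_right.2 h] at hsplit
    · rw [sup_eq_left.2 h] at hsplit
      have hbot := eq_bot_of_eq_add hneg hsplit
      rw [hbot, WithBot.add_bot, le_bot_iff] at h
      rw [hbot, h]
  refine hfull.not_lt (rowRank_lt_of_mem_genBy E i ?_)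
  rw [hrow]
  exact IsTropSubmodule.finset_sup_mem (isTropSubmodule_genBy _) ⟨k, by simp [hki]⟩
    fun l hl => (isTropSubmodule_genBy _).2 _ _ (subset_genBy _ ⟨l, hl, rfl⟩)

/-- The term of a generating combination that attains `F i i = 0` is a multiple of row `i`. -/
lemma exists_mem_add_eq_row {F : Fin n → Fin n → Trop} (hidem : tmul F F = F)
    (hdiag : ∀ i, F i i = 0) (hsep : ∀ i k, F i k + F k i = 0 → i = k)
    {G : Finset (Fin n → Trop)} (hG : genBy ↑G = rowSpace F) (i : Fin n) :
    ∃ g ∈ G, ∃ c : Trop, ∀ j, g j + c = F i j := by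
  obtain ⟨e, he⟩ := genBy_subset_span G id (by simp)
    (hG ▸ subset_genBy _ ⟨i, rfl⟩ : (fun j => F i j) ∈ genBy ↑G)
  have hGne : G.Nonempty := by
    rcases G.eq_empty_or_nonempty with rfl | h
    · simpa [hdiag] using congrFun he i
    · exact h
  obtain ⟨g, hg, hgi⟩ := exists_mem_eq_sup G hGne fun g => g i + e g
  have hg0 : g i + e g = 0 := by rw [← hgi, ← hdiag i, congrFun he i]; rfl
  have hgle : ∀ j, g j + e g ≤ F i j := fun j => by
    rw [congrFun he j]
    exact le_sup (f := fun g : Fin n → Trop => g j + e g) hg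
  obtain ⟨d, hd⟩ := genBy_subset_span univ (fun k j => F k j)
    (by rintro _ ⟨k, rfl⟩; exact ⟨k, mem_univ k, rfl⟩) (hG ▸ subset_genBy _ hg : g ∈ rowSpace F)
  have : Nonempty (Fin n) := ⟨i⟩
  obtain ⟨k, -, hk⟩ := exists_mem_eq_sup univ univ_nonempty fun k => F k i + d k
  have hw : F k i + (d k + e g) = 0 := by rw [← add_assoc, ← hk, ← congrFun hd i, hg0]
  have hwle : ∀ j, F k j + (d k + e g) ≤ F i j := fun j => by
    refine (add_assoc (F k j) _ _).symm.trans_le ((add_le_add_left ?_ _).trans (hgle j))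
    rw [hd]
    exact le_sup (f := fun k => F k j + d k) (mem_univ k)
  have hki : k = i := by
    refine hsep k i (le_antisymm (hdiag k ▸ add_le_of_tmul_self hidem k i k) ?_)
    calc 0 = F k i + (F k k + (d k + e g)) := by rw [hdiag, zero_add, hw]
      _ ≤ F k i + F i k := add_le_add_right (hwle k) _
  subst hki
  have hw0 : d k + e g = 0 := by simpa [hdiag] using hw
  refine ⟨g, hg, e g, fun j => le_antisymm (hgle j) ?_⟩
  calc F k j = F k j + (d k + e g) := by rw [hw0, add_zero]
    _ ≤ g j + e g := by
      rw [← add_assoc, hd]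
      exact add_le_add_left (le_sup (f := fun k => F k j + d k) (mem_univ k)) _

lemma rowRank_eq_of_tmul_self_eq {F : Fin n → Fin n → Trop} (hidem : tmul F F = F)
    (hdiag : ∀ i, F i i = 0) (hsep : ∀ i k, F i k + F k i = 0 → i = k) : rowRank F = n := by
  obtain ⟨G, hcard, hG⟩ := exists_card_eq_rowRank F
  choose g hg c hc using exists_mem_add_eq_row hidem hdiag hsep hG
  have hinj : Function.Injective g := fun i i' h => hsep i i' <| by
    have h1 : g i i + c i = 0 := (hc i i).trans (hdiag i)
    have h2 : g i i' + c i' = 0 := by rw [h, hc i' i', hdiag]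
    calc F i i' + F i' i = (g i i' + c i) + (g i' i + c i') := by rw [hc, hc]
      _ = (g i i + c i) + (g i i' + c i') := by rw [← h]; ac_rfl
      _ = 0 := by rw [h1, h2, add_zero]
  refine le_antisymm
    (by simpa using rowRank_le_card F univ fun i => subset_genBy _ ⟨i, by simp, rfl⟩) ?_
  simpa [← hcard] using card_le_card_of_injOn (s := univ) g (fun i _ => hg i) hinj.injOn

lemma colRank_eq_of_tmul_self_eq {F : Fin n → Fin n → Trop} (hidem : tmul F F = F)
    (hdiag : ∀ i, F i i = 0) (hsep : ∀ i k, F i k + F k i = 0 → i = k) : colRank F = n :=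
  rowRank_eq_of_tmul_self_eq (F := Fᵀ) (by rw [← transpose_tmul, hidem]) hdiag
    fun i k h => (hsep k i h).symm

end Rank

section Fill

variable {n : ℕ} (E : Fin n → Fin n → Trop)

/-- The `Σ` of the statement (`unbotD 0` sends `-∞` to `0`, so only finite entries count). -/
def absSum : ℝ := ∑ i, ∑ j, |(E i j).unbotD 0|

def rowMax (i : Fin n) : Trop := univ.sup fun t => E i t

def colMax (j : Fin n) : Trop := univ.sup fun s => E s j

noncomputable def fillBot (c : ℝ) : Fin n → Fin n → Trop :=
  fun i j => if E i j = ⊥ then (c : Trop) else E i j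

noncomputable def fillBotClosure (c : ℝ) : Fin n → Fin n → Trop :=
  fun i j => if E i j = ⊥ then rowMax E i + c + colMax E j else E i j

variable {E}

lemma absSum_nonneg : 0 ≤ absSum E :=
  sum_nonneg fun _ _ => sum_nonneg fun _ _ => abs_nonneg _

lemma sum_abs_le_absSum (S : Finset (Fin n × Fin n)) :
    ∑ p ∈ S, |(E p.1 p.2).unbotD 0| ≤ absSum E := by
  rw [absSum, ← Fintype.sum_prod_type']
  exact sum_le_univ_sum_of_nonneg fun _ => abs_nonneg _

lemma abs_le_absSum {i j : Fin n} {a : ℝ} (h : E i j = a) : |a| ≤ absSum E := by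
  simpa [h] using sum_abs_le_absSum (E := E) {(i, j)}

lemma le_absSum (i j : Fin n) : E i j ≤ absSum E := by
  induction h : E i j using WithBot.recBotCoe with
  | bot => exact bot_le
  | coe a => exact WithBot.coe_le_coe.2 ((le_abs_self a).trans (abs_le_absSum h))

lemma neg_absSum_le {i j : Fin n} (h : E i j ≠ ⊥) : ((-absSum E : ℝ) : Trop) ≤ E i j := by
  obtain ⟨a, ha⟩ := WithBot.ne_bot_iff_exists.1 h
  rw [← ha]
  exact WithBot.coe_le_coe.2 (neg_le.1 ((neg_le_abs a).trans (abs_le_absSum ha.symm)))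

lemma exists_rowMax_eq (i : Fin n) : ∃ u, rowMax E i = E i u := by
  have : Nonempty (Fin n) := ⟨i⟩
  obtain ⟨u, -, hu⟩ := exists_mem_eq_sup univ univ_nonempty fun t => E i t
  exact ⟨u, hu⟩

lemma exists_colMax_eq (j : Fin n) : ∃ s, colMax E j = E s j := by
  have : Nonempty (Fin n) := ⟨j⟩
  obtain ⟨s, -, hs⟩ := exists_mem_eq_sup univ univ_nonempty fun s => E s j
  exact ⟨s, hs⟩

lemma le_rowMax (i t : Fin n) : E i t ≤ rowMax E i := le_sup (f := fun t => E i t) (mem_univ t)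

lemma le_colMax (s j : Fin n) : E s j ≤ colMax E j := le_sup (f := fun s => E s j) (mem_univ s)

lemma rowMax_le_absSum (i : Fin n) : rowMax E i ≤ absSum E :=
  Finset.sup_le fun t _ => le_absSum i t

lemma colMax_le_absSum (j : Fin n) : colMax E j ≤ absSum E :=
  Finset.sup_le fun s _ => le_absSum s j

lemma zero_le_rowMax (hdiag : ∀ i, E i i = 0) (i : Fin n) : 0 ≤ rowMax E i :=
  hdiag i ▸ le_rowMax i i

lemma zero_le_colMax (hdiag : ∀ i, E i i = 0) (j : Fin n) : 0 ≤ colMax E j :=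
  hdiag j ▸ le_colMax j j

lemma ne_bot_of_zero_le {x : Trop} (h : 0 ≤ x) : x ≠ ⊥ :=
  ne_bot_of_le_ne_bot WithBot.coe_ne_bot h

lemma add_rowMax_le (hidem : tmul E E = E) (i k : Fin n) : E i k + rowMax E k ≤ rowMax E i := by
  obtain ⟨u, hu⟩ := exists_rowMax_eq (E := E) k
  rw [hu]
  exact (add_le_of_tmul_self hidem i k u).trans (le_rowMax i u)

lemma colMax_add_le (hidem : tmul E E = E) (k j : Fin n) : colMax E k + E k j ≤ colMax E j := by
  obtain ⟨s, hs⟩ := exists_colMax_eq (E := E) k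
  rw [hs]
  exact (add_le_of_tmul_self hidem s k j).trans (le_colMax s j)

/-- This is where the choice of `Σ` enters: outside the degenerate cases `rowMax E i`,
`colMax E j` and `E i j` are three different entries of `E`. -/
lemma rowMax_add_colMax_le (hdiag : ∀ i, E i i = 0) {i j : Fin n} (hij : E i j ≠ ⊥) :
    rowMax E i + colMax E j ≤ absSum E + E i j := by
  obtain ⟨u, hu⟩ := exists_rowMax_eq (E := E) i
  obtain ⟨s, hs⟩ := exists_colMax_eq (E := E) j
  by_cases huj : u = j
  · rw [hu, huj, add_comm]
    exact add_le_add_left (colMax_le_absSum j) _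
  by_cases hsi : s = i
  · rw [hs, hsi]
    exact add_le_add_left (rowMax_le_absSum i) _
  obtain ⟨a, ha⟩ := WithBot.ne_bot_iff_exists.1 (hu ▸ ne_bot_of_zero_le (zero_le_rowMax hdiag i))
  obtain ⟨b, hb⟩ := WithBot.ne_bot_iff_exists.1 (hs ▸ ne_bot_of_zero_le (zero_le_colMax hdiag j))
  obtain ⟨e, he⟩ := WithBot.ne_bot_iff_exists.1 hij
  have h3 := sum_abs_le_absSum (E := E) {(i, u), (s, j), (i, j)}
  rw [sum_insert (by simp [huj]), sum_insert (by simp [hsi]), sum_singleton, ← ha, ← hb, ← he]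
    at h3
  simp only [WithBot.unbotD_coe] at h3
  rw [hu, hs, ← ha, ← hb, ← he]
  norm_cast
  linarith [le_abs_self a, le_abs_self b, neg_abs_le e]

lemma rowMax_add_colMax_self_le (hdiag : ∀ i, E i i = 0) (k : Fin n) :
    rowMax E k + colMax E k ≤ absSum E := by
  simpa [hdiag] using rowMax_add_colMax_le hdiag (i := k) (j := k) (by simp [hdiag])

variable (c : ℝ)

lemma le_fillBot : E ≤ fillBot E c := fun i j => by
  unfold fillBot
  split_ifs with h
  · exact h ▸ bot_le
  · exact le_rfl

lemma fillBot_of_ne_bot {i j : Fin n} (h : E i j ≠ ⊥) : fillBot E c i j = E i j := if_neg h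

lemma fillBotClosure_of_bot {i j : Fin n} (h : E i j = ⊥) :
    fillBotClosure E c i j = rowMax E i + c + colMax E j := if_pos h

lemma fillBotClosure_of_ne_bot {i j : Fin n} (h : E i j ≠ ⊥) : fillBotClosure E c i j = E i j :=
  if_neg h

lemma le_fillBotClosure : E ≤ fillBotClosure E c := fun i j => by
  by_cases h : E i j = ⊥
  · exact h ▸ bot_le
  · exact (fillBotClosure_of_ne_bot c h).ge

lemma fillBotClosure_diag (hdiag : ∀ i, E i i = 0) (i : Fin n) : fillBotClosure E c i i = 0 := by
  rw [fillBotClosure_of_ne_bot c (by simp [hdiag]), hdiag]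

lemma fillBotClosure_ne_bot (hdiag : ∀ i, E i i = 0) (i j : Fin n) :
    fillBotClosure E c i j ≠ ⊥ := by
  by_cases h : E i j = ⊥
  · rw [fillBotClosure_of_bot c h]
    exact WithBot.add_ne_bot.2 ⟨WithBot.add_ne_bot.2 ⟨ne_bot_of_zero_le (zero_le_rowMax hdiag i),
      WithBot.coe_ne_bot⟩, ne_bot_of_zero_le (zero_le_colMax hdiag j)⟩
  · rwa [fillBotClosure_of_ne_bot c h]

lemma fillBot_le_fillBotClosure (hdiag : ∀ i, E i i = 0) : fillBot E c ≤ fillBotClosure E c := by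
  intro i j
  by_cases h : E i j = ⊥
  · rw [fillBot, if_pos h, fillBotClosure_of_bot c h]
    calc (c : Trop) = 0 + c + 0 := by rw [zero_add, add_zero]
      _ ≤ rowMax E i + c + colMax E j :=
        add_le_add (add_le_add_left (zero_le_rowMax hdiag i) _) (zero_le_colMax hdiag j)
  · rw [fillBot_of_ne_bot c h, fillBotClosure_of_ne_bot c h]

variable {c}

lemma coe_le_fillBot (hc : c ≤ -absSum E) (i j : Fin n) : (c : Trop) ≤ fillBot E c i j := by
  unfold fillBot
  split_ifs with h
  · exact le_rfl
  · exact (WithBot.coe_le_coe.2 hc).trans (neg_absSum_le h)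

lemma rowMax_add_colMax_le_fillBotClosure (hdiag : ∀ i, E i i = 0) (hc : c ≤ -absSum E)
    (i j : Fin n) : rowMax E i + c + colMax E j ≤ fillBotClosure E c i j := by
  by_cases h : E i j = ⊥
  · rw [fillBotClosure_of_bot c h]
  · rw [fillBotClosure_of_ne_bot c h]
    calc rowMax E i + c + colMax E j = (rowMax E i + colMax E j) + c := by ac_rfl
      _ ≤ (absSum E + E i j) + c := add_le_add_left (rowMax_add_colMax_le hdiag h) _
      _ = E i j + ((absSum E : Trop) + c) := by ac_rfl
      _ ≤ E i j := add_le_of_nonpos_right (by exact_mod_cast (show absSum E + c ≤ 0 by linarith))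

lemma fillBotClosure_le_rowMax (hc : c ≤ -absSum E) (i j : Fin n) :
    fillBotClosure E c i j ≤ rowMax E i := by
  by_cases h : E i j = ⊥
  · rw [fillBotClosure_of_bot c h, add_assoc]
    refine add_le_of_nonpos_right ((add_le_add_right (colMax_le_absSum j) _).trans ?_)
    exact_mod_cast (show c + absSum E ≤ 0 by linarith)
  · rw [fillBotClosure_of_ne_bot c h]
    exact le_rowMax i j

lemma fillBotClosure_add_le (hidem : tmul E E = E) (hdiag : ∀ i, E i i = 0) {c' : ℝ}
    (hc' : c' ≤ c) (hc : c ≤ -absSum E) (i k j : Fin n) :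
    fillBotClosure E c' i k + fillBotClosure E c k j ≤ fillBotClosure E c i j := by
  have hRC := rowMax_add_colMax_le_fillBotClosure hdiag hc i j
  by_cases hik : E i k = ⊥ <;> by_cases hkj : E k j = ⊥
  · rw [fillBotClosure_of_bot _ hik, fillBotClosure_of_bot _ hkj]
    refine le_trans ?_ hRC
    calc rowMax E i + c' + colMax E k + (rowMax E k + c + colMax E j)
        = rowMax E i + c + colMax E j + (c' + (rowMax E k + colMax E k)) := by ac_rfl
      _ ≤ rowMax E i + c + colMax E j := add_le_of_nonpos_right <|
          (add_le_add_right (rowMax_add_colMax_self_le hdiag k) _).trans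
            (by exact_mod_cast (show c' + absSum E ≤ 0 by linarith))
  · rw [fillBotClosure_of_bot _ hik, fillBotClosure_of_ne_bot _ hkj, add_assoc]
    exact (add_le_add (add_le_add_right (WithBot.coe_le_coe.2 hc') _)
      (colMax_add_le hidem k j)).trans hRC
  · rw [fillBotClosure_of_ne_bot _ hik, fillBotClosure_of_bot _ hkj, ← add_assoc, ← add_assoc]
    exact (add_le_add_left (add_le_add_left (add_rowMax_le hidem i k) _) _).trans hRC
  · rw [fillBotClosure_of_ne_bot _ hik, fillBotClosure_of_ne_bot _ hkj]
    exact (add_le_of_tmul_self hidem i k j).trans (le_fillBotClosure c i j)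

lemma fillBotClosure_tmul_fillBotClosure (hidem : tmul E E = E) (hdiag : ∀ i, E i i = 0)
    {c' : ℝ} (hc' : c' ≤ c) (hc : c ≤ -absSum E) :
    tmul (fillBotClosure E c') (fillBotClosure E c) = fillBotClosure E c :=
  tmul_eq_right (fillBotClosure_diag c' hdiag) (fillBotClosure_add_le hidem hdiag hc' hc)

lemma tmul_fillBotClosure (hidem : tmul E E = E) (hdiag : ∀ i, E i i = 0) (hc : c ≤ -absSum E) :
    tmul E (fillBotClosure E c) = fillBotClosure E c :=
  tmul_eq_right hdiag fun i k j => (add_le_add_left (le_fillBotClosure c i k) _).trans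
    (fillBotClosure_add_le hidem hdiag le_rfl hc i k j)

end Fill

section Closure

variable {n : ℕ} {E : Fin n → Fin n → Trop} {c : ℝ}

/-- One step of `fillBot E c` never leaves the closure, and the closure is attained by the paths
`i → u → s → j` through the maximal entries of row `i` and column `j`. -/
lemma tpow_fillBot_eq (hidem : tmul E E = E) (hdiag : ∀ i, E i i = 0) (hc : c ≤ -absSum E)
    {t : ℕ} (ht : 1 ≤ t)
    (hpow : tmul (tpow (fillBot E c) t) (tpow (fillBot E c) t) = tpow (fillBot E c) t) :
    tpow (fillBot E c) t = fillBotClosure E c := by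
  refine le_antisymm (tpow_le ?_ ?_ t) fun i j => ?_
  · intro i j
    unfold tId
    split_ifs with h
    · exact h ▸ (fillBotClosure_diag c hdiag i).ge
    · exact bot_le
  · exact fun i k j => (add_le_add_left (fillBot_le_fillBotClosure c hdiag i k) _).trans
      (fillBotClosure_add_le hidem hdiag le_rfl hc i k j)
  have hA : fillBot E c ≤ tpow (fillBot E c) t :=
    le_tpow (fun i => by rw [fillBot_of_ne_bot c (by simp [hdiag]), hdiag]) ht
  by_cases h : E i j = ⊥
  · obtain ⟨u, hu⟩ := exists_rowMax_eq (E := E) i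
    obtain ⟨s, hs⟩ := exists_colMax_eq (E := E) j
    have hiu : E i u ≠ ⊥ := hu ▸ ne_bot_of_zero_le (zero_le_rowMax hdiag i)
    have hsj : E s j ≠ ⊥ := hs ▸ ne_bot_of_zero_le (zero_le_colMax hdiag j)
    rw [fillBotClosure_of_bot c h, hu, hs, ← fillBot_of_ne_bot c hiu, ← fillBot_of_ne_bot c hsj]
    calc fillBot E c i u + c + fillBot E c s j
        ≤ fillBot E c i u + fillBot E c u s + fillBot E c s j := by
          gcongr
          exact coe_le_fillBot hc u s
      _ ≤ tpow (fillBot E c) t i u + tpow (fillBot E c) t u s + tpow (fillBot E c) t s j := by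
          gcongr <;> apply hA
      _ ≤ tpow (fillBot E c) t i j :=
          (add_le_add_left (add_le_of_tmul_self hpow i u s) _).trans
            (add_le_of_tmul_self hpow i s j)
  · rw [fillBotClosure_of_ne_bot c h]
    exact (le_fillBot c i j).trans (hA i j)

lemma fillBotClosure_add_lt_zero_of_bot (hidem : tmul E E = E) (hdiag : ∀ i, E i i = 0)
    (hc : c < -absSum E) {i k : Fin n} (h : E i k = ⊥) :
    fillBotClosure E c i k + fillBotClosure E c k i < 0 := by
  obtain ⟨u, hu⟩ := exists_rowMax_eq (E := E) i
  have hki : fillBotClosure E c k i + rowMax E i ≤ rowMax E k := by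
    rw [hu]
    exact (add_le_add_right (le_fillBotClosure c i u) _).trans
      ((fillBotClosure_add_le hidem hdiag le_rfl hc.le k i u).trans
        (fillBotClosure_le_rowMax hc.le k u))
  rw [fillBotClosure_of_bot c h]
  calc rowMax E i + c + colMax E k + fillBotClosure E c k i
      = (fillBotClosure E c k i + rowMax E i) + colMax E k + c := by ac_rfl
    _ ≤ rowMax E k + colMax E k + c := add_le_add_left (add_le_add_left hki _) _
    _ ≤ absSum E + c := add_le_add_left (rowMax_add_colMax_self_le hdiag k) _
    _ < 0 := by exact_mod_cast (show absSum E + c < 0 by linarith)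

lemma eq_of_fillBotClosure_add_eq_zero (hidem : tmul E E = E) (hdiag : ∀ i, E i i = 0)
    (hfull : rowRank E = n) (hc : c < -absSum E) {i k : Fin n}
    (h : fillBotClosure E c i k + fillBotClosure E c k i = 0) : i = k := by
  by_cases hik : E i k = ⊥
  · exact absurd h (fillBotClosure_add_lt_zero_of_bot hidem hdiag hc hik).ne
  by_cases hki : E k i = ⊥
  · exact absurd ((add_comm _ _).trans h) (fillBotClosure_add_lt_zero_of_bot hidem hdiag hc hki).ne
  rw [fillBotClosure_of_ne_bot c hik, fillBotClosure_of_ne_bot c hki] at h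
  exact eq_of_add_eq_zero_of_rowRank_eq hidem hfull h

lemma rowRank_fillBotClosure (hidem : tmul E E = E) (hdiag : ∀ i, E i i = 0)
    (hfull : rowRank E = n) (hc : c < -absSum E) : rowRank (fillBotClosure E c) = n :=
  rowRank_eq_of_tmul_self_eq (fillBotClosure_tmul_fillBotClosure hidem hdiag le_rfl hc.le)
    (fillBotClosure_diag c hdiag) fun _ _ => eq_of_fillBotClosure_add_eq_zero hidem hdiag hfull hc

lemma colRank_fillBotClosure (hidem : tmul E E = E) (hdiag : ∀ i, E i i = 0)
    (hfull : rowRank E = n) (hc : c < -absSum E) : colRank (fillBotClosure E c) = n :=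
  colRank_eq_of_tmul_self_eq (fillBotClosure_tmul_fillBotClosure hidem hdiag le_rfl hc.le)
    (fillBotClosure_diag c hdiag) fun _ _ => eq_of_fillBotClosure_add_eq_zero hidem hdiag hfull hc

lemma coe_eq_zero_of_tmul_self_eq [Subsingleton (Fin n)] {A : Fin n → Fin n → Trop}
    (hA : tmul A A = A) {i : Fin n} {a : ℝ} (ha : A i i = a) : a = 0 := by
  have h := congrFun (congrFun hA i) i
  rw [tmul_apply_of_subsingleton A A i i i, ha] at h
  have : a + a = a := by exact_mod_cast h
  linarith

/-- With a single index the matrix `(-∞)` has full rank (as `genBy ∅ = ∅`); only the idempotent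
power of `fillBot E c` excludes it. -/
lemma diag_eq_zero (hidem : tmul E E = E) (hfull : rowRank E = n) (hc : c < 0) {t : ℕ}
    (ht : 1 ≤ t)
    (hpow : tmul (tpow (fillBot E c) t) (tpow (fillBot E c) t) = tpow (fillBot E c) t)
    (i : Fin n) : E i i = 0 := by
  by_cases hi : ∃ k, k ≠ i
  · obtain ⟨k, hk⟩ := hi
    exact diag_eq_zero_of_rowRank_eq hidem hfull hk
  push Not at hi
  have : Subsingleton (Fin n) := ⟨fun a b => (hi a).trans (hi b).symm⟩
  induction h : E i i using WithBot.recBotCoe with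
  | bot =>
    have hAii : fillBot E c i i = c := if_pos h
    have := coe_eq_zero_of_tmul_self_eq hpow (tpow_apply_of_subsingleton _ i hAii t)
    have : (1 : ℝ) ≤ t := by exact_mod_cast ht
    nlinarith
  | coe a => rw [coe_eq_zero_of_tmul_self_eq hidem h]; rfl

end Closure

section ColumnSpace

variable {n : ℕ} {E : Fin n → Fin n → Trop}

lemma eventually_add_coe_mul_le {N : ℝ} (hN : N < 0) (a : Trop) {b : Trop} (hb : b ≠ ⊥) :
    ∀ᶠ m : ℕ in atTop, a + ((m * N : ℝ) : Trop) ≤ b := by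
  obtain ⟨β, rfl⟩ := WithBot.ne_bot_iff_exists.1 hb
  induction a using WithBot.recBotCoe with
  | bot => exact Eventually.of_forall fun _ => by simp
  | coe α =>
    filter_upwards [(tendsto_natCast_atTop_atTop.atTop_mul_const_of_neg hN).eventually_le_atBot
      (β - α)] with m hm
    exact_mod_cast (show α + m * N ≤ β by linarith)

lemma eventually_tvmul_fillBotClosure_eq {N : ℝ} (hN : N < 0)
    {d : Fin n → Trop} (hd : ∀ i, tvmul E d i ≠ ⊥) :
    ∀ᶠ m : ℕ in atTop, tvmul (fillBotClosure E (m * N)) d = tvmul E d := by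
  have key : ∀ i k, ∀ᶠ m : ℕ in atTop, fillBotClosure E (m * N) i k + d k ≤ tvmul E d i := by
    intro i k
    by_cases h : E i k = ⊥
    · filter_upwards [eventually_add_coe_mul_le hN (rowMax E i + colMax E k + d k) (hd i)]
        with m hm
      rw [fillBotClosure_of_bot _ h]
      exact le_of_eq_of_le (by ac_rfl) hm
    · refine Eventually.of_forall fun m => ?_
      rw [fillBotClosure_of_ne_bot _ h]
      exact le_sup (f := fun k => E i k + d k) (mem_univ k)
  filter_upwards [eventually_all.2 fun i => eventually_all.2 (key i)] with m hm
  funext i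
  refine le_antisymm (Finset.sup_le fun k _ => hm i k) (Finset.sup_le fun k _ => ?_)
  exact (add_le_add_left (le_fillBotClosure _ i k) _).trans
    (le_sup (f := fun k => fillBotClosure E (m * N) i k + d k) (mem_univ k))

lemma colSpace_inter_eq_iUnion (hidem : tmul E E = E) (hdiag : ∀ i, E i i = 0) {N : ℝ}
    (hN : N < -absSum E) {F : ℕ → Fin n → Fin n → Trop}
    (hF : ∀ m, 1 ≤ m → F m = fillBotClosure E (m * N)) :
    colSpace E ∩ {x | ∀ i, x i ≠ ⊥} =
      ⋃ (m : ℕ) (_ : 1 ≤ m), (colSpace (F m) \ {fun _ => (⊥ : Trop)}) := by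
  have hN0 : N < 0 := hN.trans_le (neg_nonpos.2 absSum_nonneg)
  ext x
  simp only [Set.mem_inter_iff, Set.mem_ofPred_eq, Set.mem_iUnion, Set.mem_sdiff,
    Set.mem_singleton_iff, exists_prop]
  constructor
  · rintro ⟨hxE, hx⟩
    have hne := nonempty_of_mem_colSpace hxE
    obtain ⟨d, rfl⟩ := colSpace_subset_range E hxE
    obtain ⟨m, hm1, hm⟩ :=
      ((eventually_ge_atTop 1).and (eventually_tvmul_fillBotClosure_eq hN0 hx)).exists
    refine ⟨m, hm1, ?_, fun h => ?_⟩
    · rw [hF m hm1, ← hm]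
      exact tvmul_mem_colSpace _ d
    · obtain ⟨i⟩ := hne
      exact hx i (congrFun h i)
  · rintro ⟨m, hm1, hxF, hx⟩
    rw [hF m hm1] at hxF
    have hmN : (m : ℝ) * N ≤ -absSum E := by
      have : (1 : ℝ) ≤ m := by exact_mod_cast hm1
      nlinarith
    exact ⟨colSpace_subset_colSpace (tmul_fillBotClosure hidem hdiag hmN) hxF,
      (eq_bot_or_forall_ne_bot_of_mem_colSpace (fillBotClosure_ne_bot _ hdiag) hxF).resolve_left hx⟩

end ColumnSpace

end Trop

open Trop

/-- Let `E` be a full rank idempotent, `N < -∑ |E_{ij}|` (sum over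
finite entries), and for each `m ≥ 1` let `F m` be an idempotent power of the matrix
obtained from `E` by replacing every `-∞` entry by `m·N`. Then each `F m` is a full rank
idempotent with all entries finite and explicit entries as stated, `C(F m) ⊆ C(F (m+1))`,
and `C(E) ∩ ℝ^n = ⋃_m (C(F m) \ {(-∞,…,-∞)})`. -/
theorem stmt_14 {n : ℕ} (E : Fin n → Fin n → Trop)
    (hidem : tmul E E = E) (hfull : rowRank E = n)
    (N : ℝ) (hN : N < -(∑ i, ∑ j, |WithBot.unbotD 0 (E i j)|))
    (F : ℕ → (Fin n → Fin n → Trop))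
    (hF : ∀ m, 1 ≤ m → ∃ t, 1 ≤ t ∧
      F m = tpow (fun i j => if E i j = ⊥ then (((m : ℝ) * N : ℝ) : Trop) else E i j) t ∧
      tmul (F m) (F m) = F m) :
    (∀ m, 1 ≤ m →
      (rowRank (F m) = n ∧ colRank (F m) = n) ∧
      (∀ i j, F m i j ≠ ⊥) ∧
      (∀ i j, F m i j =
        if E i j = ⊥ then
          (Finset.univ.sup fun t => E i t) + (((m : ℝ) * N : ℝ) : Trop) +
            (Finset.univ.sup fun s => E s j)
        else E i j) ∧
      colSpace (F m) ⊆ colSpace (F (m + 1))) ∧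
    (colSpace E ∩ {x | ∀ i, x i ≠ ⊥}) =
      ⋃ (m : ℕ) (_ : 1 ≤ m), (colSpace (F m) \ {fun _ => (⊥ : Trop)}) := by
  have hN : N < -absSum E := hN
  have hN0 : N < 0 := hN.trans_le (neg_nonpos.2 absSum_nonneg)
  have hmN : ∀ m : ℕ, 1 ≤ m → (m : ℝ) * N < -absSum E := fun m hm => by
    have : (1 : ℝ) ≤ m := by exact_mod_cast hm
    nlinarith
  have hdiag : ∀ i, E i i = 0 := by
    obtain ⟨t, ht, hF1, hpow⟩ := hF 1 le_rfl
    exact diag_eq_zero hidem hfull (c := (1 : ℕ) * N) (by simpa using hN0) ht (hF1 ▸ hpow)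
  have hFm : ∀ m, 1 ≤ m → F m = fillBotClosure E (m * N) := fun m hm => by
    obtain ⟨t, ht, hFt, hpow⟩ := hF m hm
    rw [hFt] at hpow ⊢
    exact tpow_fillBot_eq hidem hdiag (hmN m hm).le ht hpow
  refine ⟨fun m hm => ?_, colSpace_inter_eq_iUnion hidem hdiag hN hFm⟩
  rw [hFm m hm, hFm (m + 1) (by omega)]
  refine ⟨⟨rowRank_fillBotClosure hidem hdiag hfull (hmN m hm),
    colRank_fillBotClosure hidem hdiag hfull (hmN m hm)⟩, fillBotClosure_ne_bot _ hdiag,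
    fun i j => rfl, colSpace_subset_colSpace ?_⟩
  refine fillBotClosure_tmul_fillBotClosure hidem hdiag ?_ (hmN m hm).le
  push_cast
  linarith
end
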